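/- arXiv:1709.01714 — 2 statements merged into one kernel-verified Lean document; each statement's English description precedes it below -/
import Mathlib

section
/- Let G be a finite subgroup of SL₂(ℂ) with standard character χ₀. The square matrix M indexed by nontrivial irreducible characters ρ (rows) and nonidentity conjugacy classes [g] (columns), with entries M(ρ,[g]) = √(χ₀(g) − 2)·ρ(g), is invertible. -/
/-!
Write `M = X · diag(s(c j))` with `X i j = ρ i (c j)`. The diagonal factor is invertible: an element
`g ≠ 1` of finite order in `SL₂(ℂ)` has trace `≠ 2`, since trace `2` and determinant `1` make
`g - 1` square to zero, and then `g ^ m = 1 + m (g - 1)`. For `X`, suppose `∑ v i ρ i` vanishes at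
every `c j`. Being a class function, it then vanishes off `1`; its sum over `G` is `0` because each
nontrivial irreducible character is orthogonal to the trivial one, so it also vanishes at `1`.
Distinct irreducible characters are linearly independent by orthogonality, hence `v = 0`.
-/

open CategoryTheory

universe u

theorem one_add_pow_of_mul_self_eq_zero {R : Type*} [Ring R] {N : R} (hN : N * N = 0) (m : ℕ) :
    (1 + N) ^ m = 1 + m • N := by
  induction m with
  | zero => simp
  | succ m ih =>
    rw [pow_succ, ih, succ_nsmul]
    noncomm_ring
    simp [hN]

theorem eq_zero_of_one_add_pow_eq_one {K A : Type*} [Field K] [CharZero K] [Ring A] [Module K A]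
    {N : A} (hN : N * N = 0) {m : ℕ} (hm : m ≠ 0) (h : (1 + N) ^ m = 1) : N = 0 := by
  rw [one_add_pow_of_mul_self_eq_zero hN, add_eq_left, ← Nat.cast_smul_eq_nsmul K] at h
  exact (smul_eq_zero.1 h).resolve_left (Nat.cast_ne_zero.2 hm)

namespace Matrix.SpecialLinearGroup

theorem sub_one_mul_self_eq_zero_of_trace_eq_two {R : Type*} [CommRing R] [Nontrivial R]
    (g : SpecialLinearGroup (Fin 2) R) (h : (g : Matrix (Fin 2) (Fin 2) R).trace = 2) :
    ((g : Matrix (Fin 2) (Fin 2) R) - 1) * ((g : Matrix (Fin 2) (Fin 2) R) - 1) = 0 := by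
  have := (g : Matrix (Fin 2) (Fin 2) R).aeval_self_charpoly
  simp only [charpoly_fin_two, h, g.det_coe, map_ofNat, Polynomial.aeval_X, map_add, map_sub,
    map_mul, map_pow, map_one] at this
  rw [← this]
  noncomm_ring

theorem trace_ne_two_of_isOfFinOrder {K : Type*} [Field K] [CharZero K]
    {g : SpecialLinearGroup (Fin 2) K} (hg : IsOfFinOrder g) (h1 : g ≠ 1) :
    (g : Matrix (Fin 2) (Fin 2) K).trace ≠ 2 := by
  intro htr
  obtain ⟨m, hm, hgm⟩ := isOfFinOrder_iff_pow_eq_one.1 hg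
  have hpow : (1 + ((g : Matrix (Fin 2) (Fin 2) K) - 1)) ^ m = 1 := by
    rw [add_sub_cancel, ← coe_pow, hgm, coe_one]
  apply h1
  refine Subtype.ext ?_
  exact sub_eq_zero.1 <| eq_zero_of_one_add_pow_eq_one (K := K)
    (sub_one_mul_self_eq_zero_of_trace_eq_two g htr) hm.ne' hpow

end Matrix.SpecialLinearGroup

namespace FDRep

variable {k G : Type u} [Field k] [Group G]

theorem character_trivial : (FDRep.of (Representation.trivial k G k)).character = 1 := by
  ext g
  simp [character]

theorem character_eq_of_isConj (V : FDRep k G) {g h : G} (hgh : IsConj g h) :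
    V.character g = V.character h := by
  obtain ⟨c, rfl⟩ := isConj_iff.1 hgh
  rw [char_conj]

variable [Fintype G] [CharZero k]

private theorem card_ne_zero : (Nat.card G : k) ≠ 0 := Nat.cast_ne_zero.2 Nat.card_pos.ne'

variable [IsAlgClosed k]

instance : Simple (FDRep.of (Representation.trivial k G k)) := by
  rw [simple_iff_char_is_norm_one, character_trivial]
  simp

theorem sum_character_eq_zero (V : FDRep k G) [Simple V] (hV : V.character ≠ 1) :
    ∑ g, V.character g = 0 := by
  have := invertibleOfNonzero (card_ne_zero (k := k) (G := G))
  have hnoiso : ¬ Nonempty (V ≅ FDRep.of (Representation.trivial k G k)) :=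
    fun ⟨e⟩ => hV (by rw [char_iso e, character_trivial])
  simpa [character_trivial, hnoiso, card_ne_zero] using
    char_orthonormal V (FDRep.of (Representation.trivial k G k))

theorem linearIndependent_character {ι : Type*} (V : ι → FDRep k G) [∀ i, Simple (V i)]
    (hV : Function.Injective fun i => (V i).character) :
    LinearIndependent k fun i => (V i).character := by
  classical
  have := invertibleOfNonzero (card_ne_zero (k := k) (G := G))
  have horth : ∀ i j, ∑ g, (V i).character g * (V j).character g⁻¹ =
      if i = j then (Nat.card G : k) else 0 := by
    intro i j
    have hiso : Nonempty (V i ≅ V j) ↔ i = j :=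
      ⟨fun ⟨e⟩ => hV (char_iso e), fun h => h ▸ ⟨Iso.refl _⟩⟩
    have h := char_orthonormal (V i) (V j)
    rw [inv_mul_eq_iff_eq_mul₀ card_ne_zero, hiso] at h
    rw [h]
    split_ifs <;> simp
  rw [linearIndependent_iff']
  intro s a hsum j hj
  have := congrArg (fun f => ∑ g, f g * (V j).character g⁻¹) hsum
  simp only [Finset.sum_apply, Pi.smul_apply, smul_eq_mul, Finset.sum_mul, Pi.zero_apply,
    zero_mul, Finset.sum_const_zero] at this
  rw [Finset.sum_comm] at this
  simp_rw [mul_assoc, ← Finset.mul_sum, horth] at this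
  simpa [hj, card_ne_zero] using this

theorem linearIndependent_character_comp {ι κ : Type*} [Fintype ι] (V : ι → FDRep k G)
    [∀ i, Simple (V i)] (hV : Function.Injective fun i => (V i).character)
    (hV1 : ∀ i, (V i).character ≠ 1) (c : κ → G) (hc : ∀ g ≠ 1, ∃ j, IsConj g (c j)) :
    LinearIndependent k fun i j => (V i).character (c j) := by
  rw [Fintype.linearIndependent_iff]
  intro a ha
  set f : G → k := ∑ i, a i • (V i).character with hf
  have hf_apply (g : G) : f g = ∑ i, a i * (V i).character g := by simp [hf]
  have hf_ne_one : ∀ g ≠ 1, f g = 0 := fun g hg => by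
    obtain ⟨j, hj⟩ := hc g hg
    simpa [hf_apply, character_eq_of_isConj _ hj] using congrFun ha j
  have hf_sum : ∑ g, f g = 0 := by
    simp [hf_apply, Finset.sum_comm (γ := G), ← Finset.mul_sum, sum_character_eq_zero _ (hV1 _)]
  have hf_zero : f = 0 := funext fun g => by
    by_cases hg : g = 1
    · rw [hg, Pi.zero_apply, ← hf_sum,
        Finset.sum_eq_single 1 (fun g _ hg => hf_ne_one g hg) (by simp)]
    · exact hf_ne_one g hg
  exact Fintype.linearIndependent_iff.1 (linearIndependent_character V hV) a hf_zero

end FDRep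

theorem stmt11_general (G : Subgroup (Matrix.SpecialLinearGroup (Fin 2) ℂ)) [Fintype G]
    (χ₀ : G → ℂ)
    (hχ₀ : ∀ g : G, χ₀ g =
      Matrix.trace ((g : Matrix.SpecialLinearGroup (Fin 2) ℂ) : Matrix (Fin 2) (Fin 2) ℂ))
    (s : G → ℂ)
    (hs : ∀ g : G, g ≠ 1 → s g ^ 2 = χ₀ g - 2)
    (n : ℕ) (ρ : Fin n → G → ℂ) (c : Fin n → G)
    (hρirr : ∀ i, ∃ V : FDRep ℂ G, Simple V ∧ V.character = ρ i)
    (hρnt : ∀ i, ρ i ≠ fun _ => 1)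
    (hρinj : Function.Injective ρ)
    (hc1 : ∀ i, c i ≠ 1)
    (hcsurj : ∀ g : G, g ≠ 1 → ∃ i, IsConj g (c i)) :
    IsUnit (Matrix.of fun i j : Fin n => s (c j) * ρ i (c j)) := by
  have hs0 (j : Fin n) : s (c j) ≠ 0 := by
    have htrace := Matrix.SpecialLinearGroup.trace_ne_two_of_isOfFinOrder
      (G.subtype.isOfFinOrder (isOfFinOrder_of_finite (c j))) (by simpa using hc1 j)
    rw [← pow_ne_zero_iff two_ne_zero, hs _ (hc1 j), hχ₀, sub_ne_zero]
    exact htrace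
  have hfactor : Matrix.of (fun i j : Fin n => s (c j) * ρ i (c j)) =
      Matrix.of (fun i j : Fin n => ρ i (c j)) * Matrix.diagonal fun j => s (c j) := by
    ext i j
    simp [mul_comm]
  rw [hfactor]
  refine IsUnit.mul ?_ (Matrix.isUnit_diagonal.2 (Pi.isUnit_iff.2 fun j => (hs0 j).isUnit))
  rw [← Matrix.linearIndependent_rows_iff_isUnit]
  choose V hV hVρ using hρirr
  obtain rfl : (fun i => (V i).character) = ρ := funext hVρ
  exact FDRep.linearIndependent_character_comp V hρinj hρnt c hcsurj

/-- For a finite subgroup `G ⊂ SL₂(ℂ)` with standard character `χ₀`, the square matrix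
with entries `√(χ₀ g - 2)·ρ(g)`, rows indexed by the nontrivial irreducible characters
`ρ` and columns by representatives `c j` of the nonidentity conjugacy classes, is
invertible. -/
theorem stmt11 (G : Subgroup (Matrix.SpecialLinearGroup (Fin 2) ℂ)) [Fintype G]
    (χ₀ : G → ℂ)
    (hχ₀ : ∀ g : G, χ₀ g =
      Matrix.trace ((g : Matrix.SpecialLinearGroup (Fin 2) ℂ) : Matrix (Fin 2) (Fin 2) ℂ))
    (s : G → ℂ)
    (hs : ∀ g : G, g ≠ 1 → s g ^ 2 = χ₀ g - 2)
    (n : ℕ) (ρ : Fin n → G → ℂ) (c : Fin n → G)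
    (hρirr : ∀ i, ∃ V : FDRep ℂ G, Simple V ∧ V.character = ρ i)
    (hρnt : ∀ i, ρ i ≠ fun _ => 1)
    (hρinj : Function.Injective ρ)
    (hρsurj : ∀ V : FDRep ℂ G, Simple V → V.character ≠ (fun _ => 1) → ∃ i, V.character = ρ i)
    (hc1 : ∀ i, c i ≠ 1)
    (hcinj : ∀ i j, IsConj (c i) (c j) → i = j)
    (hcsurj : ∀ g : G, g ≠ 1 → ∃ i, IsConj g (c i)) :
    IsUnit (Matrix.of fun i j : Fin n => s (c j) * ρ i (c j)) :=
  stmt11_general G χ₀ hχ₀ s hs n ρ c hρirr hρnt hρinj hc1 hcsurj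
end

section
/- Let G be a finite subgroup of SL₂(ℂ) with standard character χ₀, and let M be the matrix with entries M(ρ,[g]) = (1/√|G|)·√(χ₀(g)−2)·ρ(g) for nontrivial irreducibles ρ and nonidentity conjugacy classes [g] (square roots chosen so that √(χ₀(g)−2)·√(χ₀(g⁻¹)−2) = χ₀(g)−2). Then M transforms the bilinear form B(e_g, e_h) = δ_{h,g⁻¹} (summed over group elements) into the form A(ρ₁,ρ₂) = ⟨χ₀·ρ₁, ρ₂⟩ − 2δ_{ρ₁,ρ₂}: that is, Σ_{g,h ≠ 1} M(ρ₁,g)·M(ρ₂,h)·δ_{h,g⁻¹} = ⟨χ₀·ρ₁,ρ₂⟩ − 2δ_{ρ₁,ρ₂}. -/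
/-!
In each inner sum only `h = g⁻¹` survives, and the choice of `s` turns `M ρ₁ g · M ρ₂ g⁻¹` into
`(χ₀ g - 2) ρ₁ g ρ₂ g⁻¹ / |G|`. This also vanishes at `g = 1`, where `χ₀ 1 = 2`, so the sum may run
over all of `G`. Since `ρ₂ g` is diagonalizable with roots of unity as eigenvalues,
`ρ₂ g⁻¹ = conj (ρ₂ g)`, and the sum splits into `⟨χ₀ ρ₁, ρ₂⟩ - 2 ⟨ρ₁, ρ₂⟩`, where the second
term is `2 δ` by orthonormality of irreducible characters.
-/

open CategoryTheory Module
open scoped Classical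

namespace Module.End

variable {K V : Type*} [Field K] [AddCommGroup V] [Module K V]

lemma isSemisimple_of_pow_eq_one {f : End K V} {n : ℕ} (hn : (n : K) ≠ 0) (hf : f ^ n = 1) :
    f.IsSemisimple :=
  isSemisimple_of_squarefree_aeval_eq_zero
    (Polynomial.X_pow_sub_one_separable_iff.mpr hn).squarefree (by simp [hf])

lemma HasEigenvalue.pow_eq_one {f : End K V} {μ : K} (hμ : f.HasEigenvalue μ) {n : ℕ}
    (hf : f ^ n = 1) : μ ^ n = 1 := by
  obtain ⟨v, hv⟩ := hμ.exists_hasEigenvector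
  have h : μ ^ n • v = (1 : K) • v := by rw [← hv.pow_apply n, hf, one_apply, one_smul]
  exact smul_left_injective K hv.2 h

lemma eigenspace_le_eigenspace_inv (u : (End K V)ˣ) (μ : K) :
    eigenspace (u : End K V) μ ≤ eigenspace ↑u⁻¹ μ⁻¹ := by
  intro x hx
  rw [mem_eigenspace_iff] at hx ⊢
  rcases eq_or_ne μ 0 with rfl | hμ
  · have hx0 : x = 0 := by
      simpa [← mul_apply] using congr_arg (↑u⁻¹ : End K V) hx
    simp [hx0]
  · calc (↑u⁻¹ : End K V) x = μ⁻¹ • (↑u⁻¹ : End K V) (μ • x) := by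
          rw [map_smul, inv_smul_smul₀ hμ]
      _ = μ⁻¹ • x := by rw [← hx, ← mul_apply, Units.inv_mul, one_apply]

lemma eigenspace_inv_units (u : (End K V)ˣ) (μ : K) :
    eigenspace ↑u⁻¹ μ⁻¹ = eigenspace (u : End K V) μ :=
  le_antisymm (by simpa using eigenspace_le_eigenspace_inv u⁻¹ μ⁻¹)
    (eigenspace_le_eigenspace_inv u μ)

lemma IsSemisimple.trace_eq_finsum_eigenspace [IsAlgClosed K] [FiniteDimensional K V]
    {f : End K V} (hf : f.IsSemisimple) :
    LinearMap.trace K V f = ∑ᶠ μ, μ * finrank K (f.eigenspace μ) := by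
  have hint : DirectSum.IsInternal f.eigenspace :=
    (DirectSum.isInternal_submodule_iff_iSupIndep_and_iSup_eq_top _).mpr
      ⟨f.eigenspaces_iSupIndep, hf.iSup_eigenspace_eq_top⟩
  have hfin : {μ | f.eigenspace μ ≠ ⊥}.Finite := f.finite_hasEigenvalue
  rw [LinearMap.trace_eq_sum_trace_restrict' hint hfin
      (fun μ => f.mem_invtSubmodule_iff_forall_mem_of_mem.mp (f.eigenspace_mem_invtSubmodule μ)),
    finsum_eq_sum_of_support_subset _ (s := hfin.toFinset) ?_]
  · refine Finset.sum_congr rfl fun μ _ => ?_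
    rw [restrict_eigenspace, map_smul, LinearMap.trace_id, smul_eq_mul]
  · refine Function.support_subset_iff'.mpr fun μ hμ => ?_
    rw [Set.Finite.coe_toFinset, Set.notMem_ofPred_iff, not_not] at hμ
    rw [Submodule.finrank_eq_zero.mpr hμ, Nat.cast_zero, mul_zero]

lemma trace_inv_eq_conj_trace {V : Type*} [AddCommGroup V] [Module ℂ V] [FiniteDimensional ℂ V]
    (u : (End ℂ V)ˣ) (hu : IsOfFinOrder u) :
    LinearMap.trace ℂ V ↑u⁻¹ = starRingEnd ℂ (LinearMap.trace ℂ V u) := by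
  obtain ⟨n, hn, hun⟩ := hu.exists_pow_eq_one
  have hn' : (n : ℂ) ≠ 0 := Nat.cast_ne_zero.mpr hn.ne'
  have hf : (u : End ℂ V) ^ n = 1 := by rw [← Units.val_pow_eq_pow_val, hun, Units.val_one]
  have hf' : (↑u⁻¹ : End ℂ V) ^ n = 1 := by
    rw [← Units.val_pow_eq_pow_val, inv_pow, hun, inv_one, Units.val_one]
  rw [(isSemisimple_of_pow_eq_one hn' hf').trace_eq_finsum_eigenspace,
    (isSemisimple_of_pow_eq_one hn' hf).trace_eq_finsum_eigenspace,
    ← finsum_comp_equiv (Equiv.inv ℂ), starRingEnd_apply, ← starAddEquiv_apply,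
    AddEquiv.map_finsum]
  refine finsum_congr fun μ => ?_
  rw [Equiv.inv_apply, eigenspace_inv_units]
  by_cases hμ : (u : End ℂ V).HasEigenvalue μ
  · rw [Complex.inv_eq_conj (Complex.norm_eq_one_of_pow_eq_one (hμ.pow_eq_one hf) hn.ne')]
    simp
  · rw [hasEigenvalue_iff, not_not] at hμ
    simp [Submodule.finrank_eq_zero.mpr hμ]

end Module.End

namespace FDRep

variable {G : Type} [Group G]

lemma char_inv [Finite G] (V : FDRep ℂ G) (g : G) :
    V.character g⁻¹ = starRingEnd ℂ (V.character g) := by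
  have h := End.trace_inv_eq_conj_trace (V.ρ.toHomUnits g)
    (V.ρ.toHomUnits.isOfFinOrder (isOfFinOrder_of_finite g))
  rwa [← map_inv, MonoidHom.coe_toHomUnits, MonoidHom.coe_toHomUnits] at h

lemma char_orthonormal_conj [Fintype G] (V W : FDRep ℂ G) [Simple V] [Simple W] :
    (Fintype.card G : ℂ)⁻¹ * ∑ g, V.character g * starRingEnd ℂ (W.character g) =
      if V.character = W.character then 1 else 0 := by
  have : Invertible (Nat.card G : ℂ) := invertibleOfNonzero (NeZero.ne _)
  simp_rw [← char_inv, ← Nat.card_eq_fintype_card]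
  split_ifs with h
  · rw [h, char_orthonormal W W, if_pos ⟨Iso.refl W⟩]
  · rw [char_orthonormal V W, if_neg fun ⟨i⟩ => h (char_iso i)]

end FDRep

theorem stmt16_general (G : Subgroup (Matrix.SpecialLinearGroup (Fin 2) ℂ)) [Fintype G]
    (χ₀ : G → ℂ)
    (hχ₀ : ∀ g : G, χ₀ g =
      Matrix.trace ((g : Matrix.SpecialLinearGroup (Fin 2) ℂ) : Matrix (Fin 2) (Fin 2) ℂ))
    (s : G → ℂ)
    (hs : ∀ g : G, g ≠ 1 → s g * s g⁻¹ = χ₀ g - 2)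
    (ρ₁ ρ₂ : G → ℂ)
    (h₁ : ∃ V : FDRep ℂ G, Simple V ∧ V.character = ρ₁)
    (h₂ : ∃ V : FDRep ℂ G, Simple V ∧ V.character = ρ₂)
    (M : (G → ℂ) → G → ℂ)
    (hM : ∀ ρ (g : G), M ρ g = ((Real.sqrt (Fintype.card G) : ℂ))⁻¹ * s g * ρ g)
    (inner : (G → ℂ) → (G → ℂ) → ℂ)
    (hinner : ∀ α β, inner α β =
      (Fintype.card G : ℂ)⁻¹ * ∑ g : G, α g * starRingEnd ℂ (β g)) :
    ∑ g ∈ Finset.univ.filter (fun g : G => g ≠ 1),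
        ∑ h ∈ Finset.univ.filter (fun h : G => h ≠ 1),
          M ρ₁ g * M ρ₂ h * (if h = g⁻¹ then 1 else 0)
      = inner (χ₀ * ρ₁) ρ₂ - 2 * (if ρ₁ = ρ₂ then 1 else 0) := by
  obtain ⟨V₁, _, rfl⟩ := h₁
  obtain ⟨V₂, _, rfl⟩ := h₂
  have hχ₀_one : χ₀ 1 = 2 := by simp [hχ₀, Matrix.trace]
  have hsqrt : ((Real.sqrt (Fintype.card G) : ℂ))⁻¹ * ((Real.sqrt (Fintype.card G) : ℂ))⁻¹ =
      (Fintype.card G : ℂ)⁻¹ := by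
    rw [← mul_inv, ← Complex.ofReal_mul, Real.mul_self_sqrt (Nat.cast_nonneg _),
      Complex.ofReal_natCast]
  have hterm : ∀ g : G, g ≠ 1 → M V₁.character g * M V₂.character g⁻¹ = (Fintype.card G : ℂ)⁻¹ *
      ((χ₀ g - 2) * V₁.character g * starRingEnd ℂ (V₂.character g)) := by
    intro g hg
    rw [hM, hM, FDRep.char_inv, ← hs g hg, ← hsqrt]
    ring
  calc _ = ∑ g ∈ Finset.univ.filter (fun g : G => g ≠ 1),
          M V₁.character g * M V₂.character g⁻¹ := by
        refine Finset.sum_congr rfl fun g hg => ?_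
        simp_rw [mul_ite, mul_one, mul_zero]
        rw [Finset.sum_ite_eq', if_pos (by simpa using hg)]
    _ = ∑ g ∈ Finset.univ.filter (fun g : G => g ≠ 1), (Fintype.card G : ℂ)⁻¹ *
          ((χ₀ g - 2) * V₁.character g * starRingEnd ℂ (V₂.character g)) :=
        Finset.sum_congr rfl fun g hg => hterm g (Finset.mem_filter.mp hg).2
    _ = ∑ g, (Fintype.card G : ℂ)⁻¹ *
          ((χ₀ g - 2) * V₁.character g * starRingEnd ℂ (V₂.character g)) :=
        Finset.sum_filter_of_ne fun g _ hg1 hg => by simp [hg, hχ₀_one] at hg1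
    _ = _ := by
        rw [hinner, ← FDRep.char_orthonormal_conj V₁ V₂, Finset.mul_sum, Finset.mul_sum,
          Finset.mul_sum, ← Finset.sum_sub_distrib]
        refine Finset.sum_congr rfl fun g _ => ?_
        rw [Pi.mul_apply]
        ring

/-- For a finite subgroup `G ⊂ SL₂(ℂ)` with standard character `χ₀` and the matrix
`M ρ g = (1/√|G|)·√(χ₀ g − 2)·ρ g` (square roots chosen so that
`√(χ₀ g − 2)·√(χ₀ g⁻¹ − 2) = χ₀ g − 2`), `M` transforms the form `δ_{h,g⁻¹}` into
`⟨χ₀·ρ₁, ρ₂⟩ − 2δ_{ρ₁,ρ₂}`: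
`∑_{g,h ≠ 1} M ρ₁ g · M ρ₂ h · δ_{h,g⁻¹} = ⟨χ₀·ρ₁,ρ₂⟩ − 2δ_{ρ₁,ρ₂}`. -/
theorem stmt16 (G : Subgroup (Matrix.SpecialLinearGroup (Fin 2) ℂ)) [Fintype G]
    (χ₀ : G → ℂ)
    (hχ₀ : ∀ g : G, χ₀ g =
      Matrix.trace ((g : Matrix.SpecialLinearGroup (Fin 2) ℂ) : Matrix (Fin 2) (Fin 2) ℂ))
    (s : G → ℂ)
    (hssq : ∀ g : G, g ≠ 1 → s g ^ 2 = χ₀ g - 2)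
    (hs : ∀ g : G, g ≠ 1 → s g * s g⁻¹ = χ₀ g - 2)
    (ρ₁ ρ₂ : G → ℂ)
    (h₁ : ∃ V : FDRep ℂ G, Simple V ∧ V.character = ρ₁)
    (h₂ : ∃ V : FDRep ℂ G, Simple V ∧ V.character = ρ₂)
    (hnt₁ : ρ₁ ≠ fun _ => 1) (hnt₂ : ρ₂ ≠ fun _ => 1)
    (M : (G → ℂ) → G → ℂ)
    (hM : ∀ ρ (g : G), M ρ g = ((Real.sqrt (Fintype.card G) : ℂ))⁻¹ * s g * ρ g)
    (inner : (G → ℂ) → (G → ℂ) → ℂ)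
    (hinner : ∀ α β, inner α β =
      (Fintype.card G : ℂ)⁻¹ * ∑ g : G, α g * starRingEnd ℂ (β g)) :
    ∑ g ∈ Finset.univ.filter (fun g : G => g ≠ 1),
        ∑ h ∈ Finset.univ.filter (fun h : G => h ≠ 1),
          M ρ₁ g * M ρ₂ h * (if h = g⁻¹ then 1 else 0)
      = inner (χ₀ * ρ₁) ρ₂ - 2 * (if ρ₁ = ρ₂ then 1 else 0) :=
  stmt16_general G χ₀ hχ₀ s hs ρ₁ ρ₂ h₁ h₂ M hM inner hinner
end
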